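/- Let N ≥ 3, μ > 0, α < 0, let j be an integer with 0 ≤ j ≤ ⌊(N-1)/2⌋ and ω > α²/(N-2j)². Then the mass of the stationary state Φ_ω^j is M[Φ_ω^j] = ((μ+1)^{1/μ}/μ) ω^{1/μ - 1/2} [ (N-2j) ∫_{T}^{1} (1-t²)^{1/μ - 1} dt + 2j ∫_{0}^{1} (1-t²)^{1/μ - 1} dt ], where T = |α| / ((N-2j)√ω). -/

import Mathlib

open Real MeasureTheory

/-- `sech y = 1 / cosh y`. -/
noncomputable def sech (y : ℝ) : ℝ := 1 / Real.cosh y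

/-- Inverse hyperbolic tangent. -/
noncomputable def artanh (x : ℝ) : ℝ := (1 / 2) * Real.log ((1 + x) / (1 - x))

/-- The half-line soliton profile `φ_{ω,a}(x) = [(μ+1)ω]^{1/(2μ)} sech^{1/μ}(μ√ω (x-a))`. -/
noncomputable def solProfile (μ ω a : ℝ) (x : ℝ) : ℝ :=
  ((μ + 1) * ω) ^ (1 / (2 * μ)) * sech (μ * Real.sqrt ω * (x - a)) ^ (1 / μ)

/-- `a^j = (1/(μ√ω)) arctanh(|α|/((N-2j)√ω))`. -/
noncomputable def aCenter (μ α : ℝ) (N j : ℕ) (ω : ℝ) : ℝ :=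
  (1 / (μ * Real.sqrt ω)) * _root_.artanh (|α| / (((N : ℝ) - 2 * j) * Real.sqrt ω))

/-- The stationary state `Φ_ω^j` with `j` bumps. -/
noncomputable def statState (μ α : ℝ) (N j : ℕ) (ω : ℝ) : Fin N → ℝ → ℝ := fun i =>
  if (i : ℕ) < j then solProfile μ ω (aCenter μ α N j ω)
  else solProfile μ ω (-(aCenter μ α N j ω))

/-- The mass `M[Ψ] = Σ_i ∫_0^∞ |ψ_i|² dx` of the stationary state `Φ_ω^j`. -/
noncomputable def massState (μ α : ℝ) (N j : ℕ) (ω : ℝ) : ℝ :=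
  ∑ i : Fin N, ∫ x in Set.Ioi (0 : ℝ), |statState μ α N j ω i x| ^ 2

/-!
The substitution `t = tanh (μ√ω (x - a))` turns `|φ_{ω,a}|² dx` on `(0, ∞)` into
`((μ+1)^{1/μ}/μ) ω^{1/μ-1/2} (1 - t²)^{1/μ-1} dt` on `(tanh (-μ√ω a), 1)`. The centre `a^j` is
chosen so that `tanh (μ√ω a^j) = T`, hence the `j` edges carrying `φ_{ω,a^j}` contribute
`∫_{-T}^1` and the other `N - j` edges contribute `∫_T^1`; since the integrand is even,
`∫_{-T}^1 = 2 ∫_0^1 - ∫_T^1`.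
-/

open Set

lemma sech_pos (y : ℝ) : 0 < sech y := one_div_pos.mpr (cosh_pos y)

lemma one_sub_tanh_sq (y : ℝ) : 1 - tanh y ^ 2 = sech y ^ 2 := by
  have hc := (cosh_pos y).ne'
  rw [tanh_eq_sinh_div_cosh, sech, div_pow, div_pow, eq_div_iff (pow_ne_zero 2 hc), sub_mul,
    div_mul_cancel₀ _ (pow_ne_zero 2 hc), one_mul]
  linarith [cosh_sq_sub_sinh_sq y]

lemma hasDerivAt_tanh (y : ℝ) : HasDerivAt tanh (sech y ^ 2) y := by
  have hsech : sech y ^ 2 = (cosh y * cosh y - sinh y * sinh y) / cosh y ^ 2 := by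
    rw [sech, div_pow, one_pow, ← cosh_sq_sub_sinh_sq y]
    ring
  rw [show tanh = fun x => sinh x / cosh x from funext tanh_eq_sinh_div_cosh, hsech]
  exact (hasDerivAt_sinh y).div (hasDerivAt_cosh y) (cosh_pos y).ne'

lemma tanh_strictMono : StrictMono tanh := fun x y hxy => by
  rwa [← artanh_lt_artanh_iff ⟨neg_one_lt_tanh x, tanh_lt_one x⟩
    ⟨neg_one_lt_tanh y, tanh_lt_one y⟩, artanh_tanh, artanh_tanh]

lemma image_tanh_Ioi (b : ℝ) : tanh '' Ioi b = Ioo (tanh b) 1 := by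
  ext y
  constructor
  · rintro ⟨x, hx, rfl⟩
    exact ⟨tanh_strictMono hx, tanh_lt_one x⟩
  · rintro ⟨hby, hy1⟩
    refine ⟨Real.artanh y, ?_, tanh_artanh ⟨(neg_one_lt_tanh b).trans hby, hy1⟩⟩
    rw [mem_Ioi, ← artanh_tanh b]
    exact artanh_lt_artanh (neg_one_lt_tanh b) hy1 hby

lemma sech_sq_mul_one_sub_tanh_sq_rpow (y p : ℝ) :
    sech y ^ 2 * (1 - tanh y ^ 2) ^ (p - 1) = sech y ^ (2 * p) := by
  rw [one_sub_tanh_sq, ← rpow_natCast, ← rpow_mul (sech_pos y).le, ← rpow_add (sech_pos y)]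
  ring_nf

theorem integral_Ioi_sech_rpow {c : ℝ} (hc : 0 < c) (a p : ℝ) :
    ∫ x in Ioi 0, sech (c * (x - a)) ^ (2 * p)
      = c⁻¹ * ∫ t in tanh (-(c * a))..1, (1 - t ^ 2) ^ (p - 1) := by
  set f : ℝ → ℝ := fun x => tanh (c * (x - a))
  have hderiv : ∀ x ∈ Ioi (0 : ℝ), HasDerivWithinAt f (c * sech (c * (x - a)) ^ 2) (Ioi 0) x :=
    fun x _ => by
      simpa [f, Function.comp_def, mul_comm] using ((hasDerivAt_tanh (c * (x - a))).comp x
        (((hasDerivAt_id x).sub_const a).const_mul c)).hasDerivWithinAt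
  have hinj : InjOn f (Ioi 0) := fun x _ y _ h => by
    simpa [hc.ne'] using tanh_injective h
  have himage : f '' Ioi 0 = Ioo (tanh (-(c * a))) 1 := by
    rw [show f = tanh ∘ (c * ·) ∘ (· - a) from rfl, image_comp, image_comp, image_sub_const_Ioi,
      image_mul_left_Ioi hc, image_tanh_Ioi, zero_sub, mul_neg]
  have hchange := integral_image_eq_integral_abs_deriv_smul measurableSet_Ioi hderiv hinj
    (fun t => (1 - t ^ 2) ^ (p - 1))
  rw [himage, ← integral_Ioc_eq_integral_Ioo,
    ← intervalIntegral.integral_of_le (tanh_lt_one _).le] at hchange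
  rw [hchange, eq_inv_mul_iff_mul_eq₀ hc.ne', ← integral_const_mul]
  refine setIntegral_congr_fun measurableSet_Ioi fun x _ => ?_
  rw [smul_eq_mul, abs_of_pos (by have := sech_pos (c * (x - a)); positivity), mul_assoc,
    sech_sq_mul_one_sub_tanh_sq_rpow]

lemma solProfile_sq {μ ω : ℝ} (h : 0 ≤ (μ + 1) * ω) (a x : ℝ) :
    solProfile μ ω a x ^ 2
      = ((μ + 1) * ω) ^ (1 / μ) * sech (μ * √ω * (x - a)) ^ (2 * (1 / μ)) := by
  rw [solProfile, mul_pow, ← rpow_natCast, ← rpow_natCast, ← rpow_mul h,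
    ← rpow_mul (sech_pos _).le]
  congr 2 <;> push_cast <;> ring

theorem integral_Ioi_solProfile_sq {μ ω : ℝ} (hμ : 0 < μ) (hω : 0 < ω) (a : ℝ) :
    ∫ x in Ioi 0, |solProfile μ ω a x| ^ 2
      = (μ + 1) ^ (1 / μ) / μ * ω ^ (1 / μ - 1 / 2)
        * ∫ t in tanh (-(μ * √ω * a))..1, (1 - t ^ 2) ^ (1 / μ - 1) := by
  simp_rw [sq_abs, solProfile_sq (by positivity : 0 ≤ (μ + 1) * ω)]
  rw [integral_const_mul, integral_Ioi_sech_rpow (by positivity), mul_rpow (by positivity) hω.le,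
    sqrt_eq_rpow, rpow_sub hω]
  ring

lemma intervalIntegrable_one_sub_sq_rpow {p A : ℝ} (hp : 0 < p) (hA : -1 < A) (hA1 : A ≤ 1) :
    IntervalIntegrable (fun t => (1 - t ^ 2) ^ (p - 1)) volume A 1 := by
  have hsing : IntervalIntegrable (fun t => (1 - t) ^ (p - 1)) volume A 1 := by
    simpa using ((intervalIntegral.intervalIntegrable_rpow' (a := 0) (b := 1 - A)
      (by linarith : -1 < p - 1)).comp_sub_left 1).symm
  have hreg : ContinuousOn (fun t => (1 + t) ^ (p - 1)) (uIcc A 1) := by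
    refine ContinuousOn.rpow_const (by fun_prop) fun t ht => Or.inl ?_
    rw [uIcc_of_le hA1] at ht
    linarith [ht.1]
  refine (hsing.mul_continuousOn hreg).congr fun t ht => ?_
  rw [uIoc_of_le hA1] at ht
  rw [← mul_rpow (by linarith [ht.2]) (by linarith [ht.1])]
  ring_nf

theorem intervalIntegral.integral_neg_eq_two_mul_sub_of_even {f : ℝ → ℝ}
    (hf : ∀ t, f (-t) = f t) {T b : ℝ} (hT : IntervalIntegrable f volume 0 T)
    (hb : IntervalIntegrable f volume 0 b) :
    ∫ t in -T..b, f t = 2 * (∫ t in 0..b, f t) - ∫ t in T..b, f t := by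
  have hreflect : ∫ t in -T..0, f t = ∫ t in 0..T, f t := by
    simpa [hf] using (intervalIntegral.integral_comp_neg (a := 0) (b := T) f).symm
  have hTneg : IntervalIntegrable f volume (-T) 0 := by
    simpa [hf] using (hT.comp_sub_left 0).symm
  have hsplit_neg := intervalIntegral.integral_add_adjacent_intervals hTneg hb
  have hsplit := intervalIntegral.integral_add_adjacent_intervals hT (hT.symm.trans hb)
  linarith

lemma Fin.sum_ite_val_lt {M : Type*} [AddCommMonoid M] {N j : ℕ} (hj : j ≤ N) (x y : M) :
    ∑ i : Fin N, (if (i : ℕ) < j then x else y) = j • x + (N - j) • y := by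
  rw [Finset.sum_ite, Finset.sum_const, Finset.sum_const, Finset.filter_not, Finset.card_sdiff]
  simp [Fin.card_filter_val_lt, hj]

lemma abs_div_mul_sqrt_mem_Ioo {α d ω : ℝ} (h : α ^ 2 / d ^ 2 < ω) :
    |α| / (d * √ω) ∈ Ioo (-1) 1 := by
  have hω : 0 < ω := (div_nonneg (sq_nonneg α) (sq_nonneg d)).trans_lt h
  rw [mem_Ioo, ← abs_lt, ← sq_lt_one_iff_abs_lt_one, div_pow, mul_pow, sq_abs, sq_sqrt hω.le,
    ← div_div, div_lt_one hω]
  exact h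

lemma artanh_eq_real_artanh {x : ℝ} (hx : x ∈ Icc (-1) 1) : _root_.artanh x = Real.artanh x :=
  (Real.artanh_eq_half_log hx).symm

theorem mass_of_statState_general (N : ℕ) (μ α : ℝ) (hμ : 0 < μ)
    (j : ℕ) (hj : j ≤ (N - 1) / 2) (ω : ℝ) (hω : α ^ 2 / ((N : ℝ) - 2 * j) ^ 2 < ω) :
    massState μ α N j ω
      = ((μ + 1) ^ (1 / μ) / μ) * ω ^ (1 / μ - 1 / 2) *
        (((N : ℝ) - 2 * j) *
            (∫ t in (|α| / (((N : ℝ) - 2 * j) * Real.sqrt ω))..(1 : ℝ),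
              (1 - t ^ 2) ^ (1 / μ - 1))
          + 2 * j * (∫ t in (0 : ℝ)..(1 : ℝ), (1 - t ^ 2) ^ (1 / μ - 1))) := by
  set T := |α| / (((N : ℝ) - 2 * j) * √ω) with hT_def
  have hω₀ : 0 < ω := (div_nonneg (sq_nonneg _) (sq_nonneg _)).trans_lt hω
  have hT : T ∈ Ioo (-1) 1 := abs_div_mul_sqrt_mem_Ioo hω
  have htanh : tanh (μ * √ω * aCenter μ α N j ω) = T := by
    rw [aCenter, ← hT_def, ← mul_assoc, mul_one_div_cancel (by positivity), one_mul,
      artanh_eq_real_artanh (Ioo_subset_Icc_self hT), tanh_artanh hT]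
  set a := aCenter μ α N j ω
  have hjN : j ≤ N := by omega
  have hp : 0 < 1 / μ := by positivity
  have hint₀ := intervalIntegrable_one_sub_sq_rpow hp neg_one_lt_zero zero_le_one
  have hint_T := intervalIntegrable_one_sub_sq_rpow hp hT.1 hT.2.le
  have hmass : massState μ α N j ω = ∑ i : Fin N, if (i : ℕ) < j
      then ∫ x in Ioi 0, |solProfile μ ω a x| ^ 2
      else ∫ x in Ioi 0, |solProfile μ ω (-a) x| ^ 2 :=
    Finset.sum_congr rfl fun i _ => apply_ite (fun f : ℝ → ℝ => ∫ x in Ioi 0, |f x| ^ 2) _ _ _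
  rw [hmass, Fin.sum_ite_val_lt hjN, nsmul_eq_mul, nsmul_eq_mul, Nat.cast_sub hjN,
    integral_Ioi_solProfile_sq hμ hω₀, integral_Ioi_solProfile_sq hμ hω₀, mul_neg, neg_neg,
    tanh_neg, htanh, intervalIntegral.integral_neg_eq_two_mul_sub_of_even (fun t => by rw [neg_sq])
      (hint₀.trans hint_T.symm) hint₀]
  ring

/-- the mass of `Φ_ω^j` equals
`((μ+1)^{1/μ}/μ) ω^{1/μ-1/2} [(N-2j) ∫_T^1 (1-t²)^{1/μ-1} dt + 2j ∫_0^1 (1-t²)^{1/μ-1} dt]`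
with `T = |α|/((N-2j)√ω)`. -/
theorem mass_of_statState (N : ℕ) (hN : 3 ≤ N) (μ α : ℝ) (hμ : 0 < μ) (hα : α < 0)
    (j : ℕ) (hj : j ≤ (N - 1) / 2) (ω : ℝ) (hω : α ^ 2 / ((N : ℝ) - 2 * j) ^ 2 < ω) :
    massState μ α N j ω
      = ((μ + 1) ^ (1 / μ) / μ) * ω ^ (1 / μ - 1 / 2) *
        (((N : ℝ) - 2 * j) *
            (∫ t in (|α| / (((N : ℝ) - 2 * j) * Real.sqrt ω))..(1 : ℝ),
              (1 - t ^ 2) ^ (1 / μ - 1))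
          + 2 * j * (∫ t in (0 : ℝ)..(1 : ℝ), (1 - t ^ 2) ^ (1 / μ - 1))) :=
  mass_of_statState_general N μ α hμ j hj ω hω
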